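/- In a (v,4)-packing with maximum PPC 𝒫 = {B₁,…,B_ρ} where B_i = {a_i,b_i,c_i,d_i}, t_{a_1}³ ≤ ⋯ ≤ t_{a_ρ}³ and t_{a_i}³ ≥ max{t_{b_i}³,t_{c_i}³,t_{d_i}³} for all i: if ρ ≥ 2, t_{a_1}³ ≥ 3 and t_{a_2}³ ≥ 6, then there is no block of the packing consisting of two points of P \ {a_1,…,a_ρ} and two points of T. -/

import Mathlib

/-- A `(v,k)`-packing: a family of `k`-subsets of a `v`-set such that
every pair of points occurs in at most one block. -/
def IsPacking (v k : ℕ) (B : Finset (Finset (Fin v))) : Prop :=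
  (∀ b ∈ B, b.card = k) ∧
    ∀ b₁ ∈ B, ∀ b₂ ∈ B, b₁ ≠ b₂ → (b₁ ∩ b₂).card ≤ 1

/-- A partial parallel class: a set of pairwise disjoint blocks of the packing. -/
def IsPPC {v : ℕ} (B P : Finset (Finset (Fin v))) : Prop :=
  P ⊆ B ∧ ∀ b₁ ∈ P, ∀ b₂ ∈ P, b₁ ≠ b₂ → Disjoint b₁ b₂

/-- The maximum PPC of `B` has size `ρ`. -/
def MaxPPCSize {v : ℕ} (B : Finset (Finset (Fin v))) (ρ : ℕ) : Prop :=
  (∃ P, IsPPC B P ∧ P.card = ρ) ∧ ∀ P, IsPPC B P → P.card ≤ ρ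

/-- `β(ρ,v,k)`: the maximum number of blocks in a `(v,k)`-packing whose
maximum partial parallel class has size `ρ`. -/
noncomputable def beta (ρ v k : ℕ) : ℕ :=
  sSup {b | ∃ B : Finset (Finset (Fin v)),
    IsPacking v k B ∧ MaxPPCSize B ρ ∧ B.card = b}

/-- The packing number `D(v,k)`. -/
noncomputable def packingNumber (v k : ℕ) : ℕ :=
  sSup {b | ∃ B : Finset (Finset (Fin v)), IsPacking v k B ∧ B.card = b}

/-!
Let `C` be such a block, with `e ∈ B_i`, `f ∈ B_j` (`i ≠ j`) off `A` and two points in `T`;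
it avoids `a_i` and `a_j`. A point of `T` lies on at most one block through `a_i`, so among the
at least three blocks of `𝒯_{a_i}³` one avoids the two points of `C` in `T`, and among the at
least six of `𝒯_{a_j}³` one avoids the five points of `T` used so far. These three blocks are
pairwise disjoint and meet the points of `P` only in `B_i ∪ B_j`, so they can replace `B_i, B_j`
in `P`, contradicting its maximality.
-/

open Finset

/-- The family `𝒯_x³` of the paper: the blocks outside `P` through `x` having three points
in `T = X \ P.sup id`. -/
def outsideTripleBlocks {v : ℕ} (B P : Finset (Finset (Fin v))) (x : Fin v) :
    Finset (Finset (Fin v)) :=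
  (B \ P).filter (fun b => x ∈ b ∧ (b \ P.sup id).card = 3)

section

variable {α : Type*} [DecidableEq α]

theorem exists_mem_disjoint_of_card_lt {F : Finset (Finset α)} {S : Finset α}
    (hS : ∀ q ∈ S, (F.filter (q ∈ ·)).card ≤ 1) (hlt : S.card < F.card) :
    ∃ C ∈ F, Disjoint S C := by
  by_contra! h
  have hcover : F ⊆ S.biUnion (fun q => F.filter (q ∈ ·)) := by
    intro C hC
    obtain ⟨q, hqS, hqC⟩ := not_disjoint_iff.1 (h C hC)
    exact mem_biUnion.2 ⟨q, hqS, mem_filter.2 ⟨hC, hqC⟩⟩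
  have := (card_le_card hcover).trans (card_biUnion_le_card_mul S _ 1 hS)
  omega

theorem disjoint_of_inter_eq_singleton {C D U : Finset α} {x : α} (hC : C ∩ U = {x})
    (hx : x ∉ D) (hD : Disjoint (D \ U) C) : Disjoint C D := by
  rw [disjoint_left]
  intro q hqC hqD
  by_cases hqU : q ∈ U
  · have hq : q ∈ C ∩ U := mem_inter.2 ⟨hqC, hqU⟩
    rw [hC, mem_singleton] at hq
    exact hx (hq ▸ hqD)
  · exact disjoint_left.1 hD (mem_sdiff.2 ⟨hqD, hqU⟩) hqC

theorem card_eq_three_of_disjoint {C D E : Finset α} (hC : C.Nonempty) (hD : D.Nonempty)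
    (hCD : Disjoint C D) (hCE : Disjoint C E) (hDE : Disjoint D E) :
    ({C, D, E} : Finset (Finset α)).card = 3 :=
  card_eq_three.2 ⟨C, D, E, hCD.ne hC.ne_empty, hCE.ne hC.ne_empty, hDE.ne hD.ne_empty, rfl⟩

theorem inter_eq_singleton_of_card_eq_card_sdiff_add_one {C U : Finset α} {x : α}
    (hcard : C.card = (C \ U).card + 1) (hxC : x ∈ C) (hxU : x ∈ U) : C ∩ U = {x} := by
  have hsplit := card_inter_add_card_sdiff C U
  obtain ⟨y, hy⟩ := card_eq_one.1 (show (C ∩ U).card = 1 by omega)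
  have hxy : x ∈ C ∩ U := mem_inter.2 ⟨hxC, hxU⟩
  rw [hy, mem_singleton] at hxy
  rw [hy, hxy]

end

namespace IsPacking

variable {v k : ℕ} {B : Finset (Finset (Fin v))}

theorem eq_of_mem_of_mem (hB : IsPacking v k B) {C D : Finset (Fin v)} (hC : C ∈ B)
    (hD : D ∈ B) {p q : Fin v} (hpq : p ≠ q) (hpC : p ∈ C) (hqC : q ∈ C) (hpD : p ∈ D)
    (hqD : q ∈ D) : C = D := by
  by_contra hCD
  have hpair := card_le_card (show {p, q} ⊆ C ∩ D by simp [insert_subset_iff, *])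
  rw [card_pair hpq] at hpair
  have := hB.2 C hC D hD hCD
  omega

theorem card_filter_mem_le_one (hB : IsPacking v k B) {F : Finset (Finset (Fin v))}
    (hF : F ⊆ B) {p q : Fin v} (hpF : ∀ C ∈ F, p ∈ C) (hpq : p ≠ q) :
    (F.filter (q ∈ ·)).card ≤ 1 := by
  rw [card_le_one]
  intro C hC D hD
  rw [mem_filter] at hC hD
  exact hB.eq_of_mem_of_mem (hF hC.1) (hF hD.1) hpq (hpF C hC.1) hC.2 (hpF D hD.1) hD.2

theorem exists_mem_outsideTripleBlocks_disjoint (hB : IsPacking v k B)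
    {P : Finset (Finset (Fin v))} {x : Fin v} {S : Finset (Fin v)} (hxS : x ∉ S)
    (hlt : S.card < (outsideTripleBlocks B P x).card) :
    ∃ C ∈ outsideTripleBlocks B P x, Disjoint S C :=
  exists_mem_disjoint_of_card_lt
    (fun _ hq => hB.card_filter_mem_le_one (filter_subset _ _ |>.trans sdiff_subset)
      (fun _ hC => (mem_filter.1 hC).2.1) (fun h => hxS (h ▸ hq))) hlt

theorem inter_sup_eq_singleton_of_mem_outsideTripleBlocks (hB : IsPacking v 4 B)
    {P : Finset (Finset (Fin v))} {x : Fin v} {C : Finset (Fin v)}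
    (hC : C ∈ outsideTripleBlocks B P x) (hx : x ∈ P.sup id) : C ∩ P.sup id = {x} := by
  obtain ⟨hCBP, hxC, hC3⟩ := mem_filter.1 hC
  exact inter_eq_singleton_of_card_eq_card_sdiff_add_one
    (by rw [hB.1 C (mem_sdiff.1 hCBP).1, hC3]) hxC hx

end IsPacking

theorem isPPC_triple {v : ℕ} {B : Finset (Finset (Fin v))} {C D E : Finset (Fin v)}
    (hC : C ∈ B) (hD : D ∈ B) (hE : E ∈ B) (hCD : Disjoint C D) (hCE : Disjoint C E)
    (hDE : Disjoint D E) : IsPPC B {C, D, E} := by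
  refine ⟨by simp [insert_subset_iff, *], ?_⟩
  simp only [mem_insert, mem_singleton]
  rintro _ (rfl | rfl | rfl) _ (rfl | rfl | rfl) hne <;>
    first | exact absurd rfl hne | assumption | exact Disjoint.symm ‹_›

namespace IsPPC

variable {v : ℕ} {B P : Finset (Finset (Fin v))}

theorem disjoint_of_inter_sup_subset (hP : IsPPC B P) {S : Finset (Finset (Fin v))}
    (hS : S ⊆ P) {C D : Finset (Fin v)} (hC : C ∩ P.sup id ⊆ S.sup id) (hD : D ∈ P \ S) :
    Disjoint C D := by
  rw [disjoint_left]
  intro q hqC hqD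
  obtain ⟨hDP, hDS⟩ := mem_sdiff.1 hD
  obtain ⟨E, hES, hqE⟩ := mem_sup.1 (hC (mem_inter.2 ⟨hqC, mem_sup.2 ⟨D, hDP, hqD⟩⟩))
  exact disjoint_left.1 (hP.2 E (hS hES) D hDP (by rintro rfl; exact hDS hES)) hqE hqD

/-- The larger PPC is `R ∪ (P \ S)`. -/
theorem exists_card_gt_of_exchange (hP : IsPPC B P) {R S : Finset (Finset (Fin v))}
    (hR : IsPPC B R) (hRne : ∀ C ∈ R, C.Nonempty) (hS : S ⊆ P)
    (hRS : ∀ C ∈ R, C ∩ P.sup id ⊆ S.sup id) (hcard : S.card < R.card) :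
    ∃ Q, IsPPC B Q ∧ P.card < Q.card := by
  have hdisj : ∀ C ∈ R, ∀ D ∈ P \ S, Disjoint C D := fun C hC _ hD =>
    hP.disjoint_of_inter_sup_subset hS (hRS C hC) hD
  refine ⟨R ∪ (P \ S), ⟨union_subset hR.1 (sdiff_subset.trans hP.1), ?_⟩, ?_⟩
  · intro C hC D hD hCD
    rcases mem_union.1 hC with hC | hC <;> rcases mem_union.1 hD with hD | hD
    · exact hR.2 C hC D hD hCD
    · exact hdisj C hC D hD
    · exact (hdisj D hD C hC).symm
    · exact hP.2 C (mem_sdiff.1 hC).1 D (mem_sdiff.1 hD).1 hCD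
  · have hRPS : Disjoint R (P \ S) := disjoint_left.2 fun C hCR hCPS =>
      (hRne C hCR).ne_empty ((disjoint_self_iff_empty C).1 (hdisj C hCR C hCPS))
    rw [card_union_of_disjoint hRPS, card_sdiff_of_subset hS]
    have := card_le_card hS
    omega

theorem exists_ne_inter_sup_subset_union {k : ℕ} (hB : IsPacking v k B) (hP : IsPPC B P)
    {C : Finset (Fin v)} (hC : C ∈ B) (hCP : C ∉ P) (hCU : (C ∩ P.sup id).card = 2) :
    ∃ D₁ ∈ P, ∃ D₂ ∈ P, D₁ ≠ D₂ ∧ C ∩ P.sup id ⊆ D₁ ∪ D₂ := by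
  obtain ⟨e, f, hef, hCef⟩ := card_eq_two.1 hCU
  have he : e ∈ C ∩ P.sup id := hCef ▸ mem_insert_self _ _
  have hf : f ∈ C ∩ P.sup id := hCef ▸ mem_insert_of_mem (mem_singleton_self _)
  obtain ⟨D₁, hD₁, heD₁⟩ := mem_sup.1 (mem_inter.1 he).2
  obtain ⟨D₂, hD₂, hfD₂⟩ := mem_sup.1 (mem_inter.1 hf).2
  refine ⟨D₁, hD₁, D₂, hD₂, ?_, ?_⟩
  · rintro rfl
    exact hCP (hB.eq_of_mem_of_mem hC (hP.1 hD₁) hef (mem_inter.1 he).1 (mem_inter.1 hf).1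
      heD₁ hfD₂ ▸ hD₁)
  · rw [hCef]
    exact insert_subset (mem_union_left _ heD₁)
      (singleton_subset_iff.2 (mem_union_right _ hfD₂))

/-- `D₁, D₂` are traded for `C`, a block of `𝒯_{x₁}³` avoiding it, and a block of `𝒯_{x₂}³`
avoiding both: the size bounds on the two families leave room for these choices. -/
theorem exists_card_gt_of_outsideTripleBlocks (hB : IsPacking v 4 B) (hP : IsPPC B P)
    {D₁ D₂ : Finset (Fin v)} (hD₁ : D₁ ∈ P) (hD₂ : D₂ ∈ P) (hD : D₁ ≠ D₂) {x₁ x₂ : Fin v}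
    (hx₁ : x₁ ∈ D₁) (hx₂ : x₂ ∈ D₂) {C : Finset (Fin v)} (hC : C ∈ B) (hCne : C.Nonempty)
    (hx₁C : x₁ ∉ C) (hx₂C : x₂ ∉ C) (hCU : C ∩ P.sup id ⊆ D₁ ∪ D₂)
    (h₁ : (C \ P.sup id).card < (outsideTripleBlocks B P x₁).card)
    (h₂ : (C \ P.sup id).card + 3 < (outsideTripleBlocks B P x₂).card) :
    ∃ Q, IsPPC B Q ∧ P.card < Q.card := by
  have hx₁U : x₁ ∈ P.sup id := le_sup (f := id) hD₁ hx₁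
  have hx₂U : x₂ ∈ P.sup id := le_sup (f := id) hD₂ hx₂
  obtain ⟨C₁, hC₁, hCC₁⟩ :=
    hB.exists_mem_outsideTripleBlocks_disjoint (notMem_sdiff_of_mem_right hx₁U) h₁
  obtain ⟨hC₁BP, hx₁C₁, hC₁3⟩ := mem_filter.1 hC₁
  have hC₁U : C₁ ∩ P.sup id = {x₁} :=
    hB.inter_sup_eq_singleton_of_mem_outsideTripleBlocks hC₁ hx₁U
  obtain ⟨C₂, hC₂, hCC₂⟩ := hB.exists_mem_outsideTripleBlocks_disjoint
    (P := P) (S := C \ P.sup id ∪ C₁ \ P.sup id)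
    (notMem_union.2 ⟨notMem_sdiff_of_mem_right hx₂U, notMem_sdiff_of_mem_right hx₂U⟩)
    (by have := card_union_le (C \ P.sup id) (C₁ \ P.sup id); omega)
  obtain ⟨hC₂BP, hx₂C₂, -⟩ := mem_filter.1 hC₂
  have hC₂U : C₂ ∩ P.sup id = {x₂} :=
    hB.inter_sup_eq_singleton_of_mem_outsideTripleBlocks hC₂ hx₂U
  rw [disjoint_union_left] at hCC₂
  have hx₂C₁ : x₂ ∉ C₁ := fun h => disjoint_left.1 (hP.2 D₁ hD₁ D₂ hD₂ hD) hx₁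
    (mem_singleton.1 (hC₁U ▸ mem_inter.2 ⟨h, hx₂U⟩) ▸ hx₂)
  have hC₁C : Disjoint C₁ C := disjoint_of_inter_eq_singleton hC₁U hx₁C hCC₁
  have hC₂C : Disjoint C₂ C := disjoint_of_inter_eq_singleton hC₂U hx₂C hCC₂.1
  have hC₂C₁ : Disjoint C₂ C₁ := disjoint_of_inter_eq_singleton hC₂U hx₂C₁ hCC₂.2
  have hcard : ({C, C₁, C₂} : Finset (Finset (Fin v))).card = 3 :=
    card_eq_three_of_disjoint hCne ⟨x₁, hx₁C₁⟩ hC₁C.symm hC₂C.symm hC₂C₁.symm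
  refine hP.exists_card_gt_of_exchange (S := {D₁, D₂})
    (isPPC_triple hC (mem_sdiff.1 hC₁BP).1 (mem_sdiff.1 hC₂BP).1 hC₁C.symm hC₂C.symm
      hC₂C₁.symm) ?_ (by simp [insert_subset_iff, hD₁, hD₂]) ?_
    (hcard ▸ card_le_two.trans_lt (by norm_num))
  · simp only [mem_insert, mem_singleton]
    rintro _ (rfl | rfl | rfl)
    exacts [hCne, ⟨x₁, hx₁C₁⟩, ⟨x₂, hx₂C₂⟩]
  · simp only [mem_insert, mem_singleton, sup_insert, sup_singleton, id]
    rintro _ (rfl | rfl | rfl)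
    · exact hCU
    · rw [hC₁U]; exact singleton_subset_iff.2 (mem_union_left _ hx₁)
    · rw [hC₂U]; exact singleton_subset_iff.2 (mem_union_right _ hx₂)

end IsPPC

theorem stmt13 (v ρ : ℕ) (hρ : 2 ≤ ρ)
    (B : Finset (Finset (Fin v))) (hpack : IsPacking v 4 B)
    (P : Finset (Finset (Fin v)))
    (hPPC : IsPPC B P) (hcard : P.card = ρ)
    (hmax : ∀ Q, IsPPC B Q → Q.card ≤ ρ)
    (t : Fin v → ℕ)
    (ht : ∀ p, t p =
      ((B \ P).filter (fun b => p ∈ b ∧ (b \ P.sup id).card = 3)).card)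
    (a b c d : Fin ρ → Fin v)
    (hblocks : ∀ i, ({a i, b i, c i, d i} : Finset (Fin v)) ∈ P)
    (hall : ∀ bl ∈ P, ∃ i, bl = ({a i, b i, c i, d i} : Finset (Fin v)))
    (hmono : ∀ i j : Fin ρ, i ≤ j → t (a i) ≤ t (a j))
    (h1 : 3 ≤ t (a ⟨0, by omega⟩)) (h2 : 6 ≤ t (a ⟨1, by omega⟩)) :
    ¬ ∃ bl ∈ B, (bl ∩ (P.sup id \ Finset.image a Finset.univ)).card = 2 ∧
        (bl \ P.sup id).card = 2 := by
  rintro ⟨C, hCB, hCA, hCT⟩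
  have ht' : ∀ p, t p = (outsideTripleBlocks B P p).card := ht
  have hsplit := card_inter_add_card_sdiff C (P.sup id)
  have hC4 := hpack.1 C hCB
  have hCU : C ∩ (P.sup id \ image a univ) = C ∩ P.sup id :=
    eq_of_subset_of_card_le (inter_subset_inter_left sdiff_subset) (by omega)
  have haC : ∀ i, a i ∉ C := fun i hi => by
    have hiU : a i ∈ C ∩ P.sup id :=
      mem_inter.2 ⟨hi, le_sup (f := id) (hblocks i) (mem_insert_self _ _)⟩
    rw [← hCU] at hiU
    exact (mem_sdiff.1 (mem_inter.1 hiU).2).2 (mem_image_of_mem a (mem_univ i))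
  have hCP : C ∉ P := fun h => by
    have hCsub : C ⊆ P.sup id := le_sup (f := id) h
    rw [sdiff_eq_empty_iff_subset.2 hCsub, card_empty] at hCT
    omega
  obtain ⟨D₁, hD₁, D₂, hD₂, hD, hCD⟩ :=
    hPPC.exists_ne_inter_sup_subset_union hpack hCB hCP (by omega)
  obtain ⟨i, rfl⟩ := hall D₁ hD₁
  obtain ⟨j, rfl⟩ := hall D₂ hD₂
  have hij : i ≠ j := by rintro rfl; exact hD rfl
  wlog hlt : i < j generalizing i j
  · exact this j hD₂ i hD₁ hD.symm (union_comm (α := Fin v) _ _ ▸ hCD) hij.symm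
      (lt_of_le_of_ne (not_lt.1 hlt) hij.symm)
  have hti := hmono ⟨0, by omega⟩ i (Nat.zero_le _)
  have htj := hmono ⟨1, by omega⟩ j (by simp only [Fin.le_def, Fin.lt_def] at hlt ⊢; omega)
  obtain ⟨Q, hQ, hPQ⟩ := hPPC.exists_card_gt_of_outsideTripleBlocks hpack hD₁ hD₂ hD
    (mem_insert_self _ _) (mem_insert_self _ _) hCB (card_pos.1 (by omega)) (haC i) (haC j)
    hCD (by rw [← ht']; omega) (by rw [← ht']; omega)
  exact absurd (hmax Q hQ) (by omega)
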